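/- arXiv:1506.05054 — 4 statements merged into one kernel-verified Lean document; each statement's English description precedes it below -/
import Mathlib

section
/- Let G be a linear oriented hypergraph on a nonempty finite vertex set V and finite edge set E with incidence matrix H, and let U be any uniformly oriented hypergraph with the same underlying hypergraph as G, i.e., U has incidence matrix H_U with σ_U(v,e) ≠ 0 exactly when σ(v,e) ≠ 0, and for each edge e all nonzero entries of column e of H_U are equal. Then λ_1(H Hᵀ) ≤ λ_1(H_U H_Uᵀ), where λ_1 denotes the largest eigenvalue of a real symmetric matrix. -/
/-!
The largest eigenvalue of `H * Hᵀ` is the maximum of `‖x ᵥ* H‖²` over unit vectors `x`.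
For every edge `e`, `|(x ᵥ* H) e| ≤ ∑ v, |σ(v,e)| |x v|`, and since all entries of a column of
`HU` have one sign, the right-hand side is exactly `|(|x| ᵥ* HU) e|`. So the unit vector `|x|`
gives `HU * HUᵀ` a Rayleigh quotient at least `λ₁(H * Hᵀ)`.
-/

open Matrix Finset

theorem abs_eq_abs_of_signs {a b : ℝ} (ha : a = -1 ∨ a = 0 ∨ a = 1) (hb : b = -1 ∨ b = 0 ∨ b = 1)
    (hab : b ≠ 0 ↔ a ≠ 0) : |a| = |b| := by
  rcases ha with rfl | rfl | rfl <;> rcases hb with rfl | rfl | rfl <;> norm_num at *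

theorem nonneg_or_nonpos_of_forall_ne_zero_eq {ι : Type*} {c : ι → ℝ}
    (hc : ∀ i j, c i ≠ 0 → c j ≠ 0 → c i = c j) : (∀ i, 0 ≤ c i) ∨ ∀ i, c i ≤ 0 := by
  by_contra! h
  obtain ⟨⟨i, hi⟩, ⟨j, hj⟩⟩ := h
  linarith [hc i j hi.ne hj.ne']

theorem abs_sum_mul_eq_sum_abs_mul {ι : Type*} (s : Finset ι) {c y : ι → ℝ}
    (hc : (∀ i, 0 ≤ c i) ∨ ∀ i, c i ≤ 0) (hy : ∀ i, 0 ≤ y i) :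
    |∑ i ∈ s, c i * y i| = ∑ i ∈ s, |c i| * y i := by
  rcases hc with hc | hc
  · rw [abs_sum_of_nonneg' fun i => mul_nonneg (hc i) (hy i)]
    simp only [abs_of_nonneg (hc _)]
  · rw [← abs_neg, ← sum_neg_distrib,
      abs_sum_of_nonneg' fun i => neg_nonneg.mpr (mul_nonpos_of_nonpos_of_nonneg (hc i) (hy i))]
    simp only [abs_of_nonpos (hc _), neg_mul]

namespace Matrix

variable {m k : Type*} [Fintype m]

theorem dotProduct_mul_transpose_mulVec [Fintype k] {R : Type*} [CommSemiring R]
    (M : Matrix m k R) (w : m → R) : w ⬝ᵥ (M * Mᵀ) *ᵥ w = (w ᵥ* M) ⬝ᵥ (w ᵥ* M) := by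
  rw [← mulVec_mulVec, dotProduct_mulVec, mulVec_transpose]

theorem abs_vecMul_le_abs_vecMul_abs {M N : Matrix m k ℝ} (habs : ∀ i j, |M i j| = |N i j|)
    (hN : ∀ j, (∀ i, 0 ≤ N i j) ∨ ∀ i, N i j ≤ 0) (x : m → ℝ) (j : k) :
    |(x ᵥ* M) j| ≤ |(|x| ᵥ* N) j| := by
  simp only [vecMul, dotProduct, Pi.abs_apply]
  simp_rw [mul_comm |x _| (N _ j)]
  rw [abs_sum_mul_eq_sum_abs_mul _ (hN j) fun i => abs_nonneg (x i)]
  refine (abs_sum_le_sum_abs _ _).trans_eq (sum_congr rfl fun i _ => ?_)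
  rw [abs_mul, habs, mul_comm]

theorem dotProduct_mul_transpose_mulVec_le_abs [Fintype k] {M N : Matrix m k ℝ}
    (habs : ∀ i j, |M i j| = |N i j|) (hN : ∀ j, (∀ i, 0 ≤ N i j) ∨ ∀ i, N i j ≤ 0)
    (x : m → ℝ) : x ⬝ᵥ (M * Mᵀ) *ᵥ x ≤ |x| ⬝ᵥ (N * Nᵀ) *ᵥ |x| := by
  rw [dotProduct_mul_transpose_mulVec, dotProduct_mul_transpose_mulVec]
  refine sum_le_sum fun j _ => ?_
  rw [← abs_mul_abs_self, ← abs_mul_abs_self ((|x| ᵥ* N) j)]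
  exact mul_self_le_mul_self (abs_nonneg _) (abs_vecMul_le_abs_vecMul_abs habs hN x j)

end Matrix

namespace Matrix.IsHermitian

variable {n : Type*} [Fintype n] [DecidableEq n] {A : Matrix n n ℝ}

theorem eigenvectorUnitary_mul_transpose (hA : A.IsHermitian) :
    (hA.eigenvectorUnitary : Matrix n n ℝ) * (hA.eigenvectorUnitary : Matrix n n ℝ)ᵀ = 1 := by
  simpa [star_eq_conjTranspose] using Unitary.coe_mul_star_self hA.eigenvectorUnitary

theorem dotProduct_mulVec_eq_sum_eigenvalues (hA : A.IsHermitian) (y : n → ℝ) :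
    y ⬝ᵥ A *ᵥ y =
      ∑ i, hA.eigenvalues i * ((hA.eigenvectorUnitary : Matrix n n ℝ)ᵀ *ᵥ y) i ^ 2 := by
  conv_lhs => rw [hA.spectral_theorem, Unitary.conjStarAlgAut_apply]
  rw [← mulVec_mulVec, ← mulVec_mulVec, dotProduct_mulVec, star_eq_conjTranspose,
    conjTranspose_eq_transpose_of_trivial, ← mulVec_transpose]
  simp only [dotProduct, mulVec_diagonal]
  exact sum_congr rfl fun i _ => by simp only [RCLike.ofReal_real_eq_id, Function.comp_apply, id_eq]; ring

theorem dotProduct_mulVec_le_sup'_eigenvalues_mul [Nonempty n] (hA : A.IsHermitian)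
    (y : n → ℝ) : y ⬝ᵥ A *ᵥ y ≤ univ.sup' univ_nonempty hA.eigenvalues * (y ⬝ᵥ y) := by
  set U : Matrix n n ℝ := ↑hA.eigenvectorUnitary
  have hnorm : y ⬝ᵥ y = ∑ i, (Uᵀ *ᵥ y) i ^ 2 := by
    have : (Uᵀ *ᵥ y) ⬝ᵥ (Uᵀ *ᵥ y) = y ⬝ᵥ y := by
      rw [dotProduct_mulVec, vecMul_transpose, mulVec_mulVec,
        hA.eigenvectorUnitary_mul_transpose, one_mulVec]
    simpa only [dotProduct, sq] using this.symm
  rw [hA.dotProduct_mulVec_eq_sum_eigenvalues, hnorm, mul_sum]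
  exact sum_le_sum fun i _ => mul_le_mul_of_nonneg_right (le_sup' _ (mem_univ i)) (sq_nonneg _)

theorem exists_dotProduct_mulVec_eq_sup'_eigenvalues [Nonempty n] (hA : A.IsHermitian) :
    ∃ x : n → ℝ, x ⬝ᵥ x = 1 ∧ x ⬝ᵥ A *ᵥ x = univ.sup' univ_nonempty hA.eigenvalues := by
  obtain ⟨i, -, hi⟩ := exists_mem_eq_sup' univ_nonempty hA.eigenvalues
  have hx : ⇑(hA.eigenvectorBasis i) ⬝ᵥ ⇑(hA.eigenvectorBasis i) = 1 := by
    have := congrArg (· ^ 2) (hA.eigenvectorBasis.orthonormal.1 i)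
    rwa [← real_inner_self_eq_norm_sq, one_pow, EuclideanSpace.inner_eq_star_dotProduct,
      star_trivial] at this
  refine ⟨hA.eigenvectorBasis i, hx, ?_⟩
  rw [hA.mulVec_eigenvectorBasis, dotProduct_smul, hx, hi, smul_eq_mul, mul_one]

end Matrix.IsHermitian

theorem laplacian_spectral_radius_le_uniformly_oriented_general
    {V E : Type*} [Fintype V] [Fintype E] [DecidableEq V] [Nonempty V]
    (H HU : Matrix V E ℝ)
    (hH : ∀ v e, H v e = -1 ∨ H v e = 0 ∨ H v e = 1)
    (hHU : ∀ v e, HU v e = -1 ∨ HU v e = 0 ∨ HU v e = 1)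
    (hsupp : ∀ v e, HU v e ≠ 0 ↔ H v e ≠ 0)
    (hunif : ∀ (e : E) (v w : V), HU v e ≠ 0 → HU w e ≠ 0 → HU v e = HU w e)
    (hL : (H * Hᵀ).IsHermitian) (hLU : (HU * HUᵀ).IsHermitian) :
    Finset.univ.sup' Finset.univ_nonempty hL.eigenvalues ≤
      Finset.univ.sup' Finset.univ_nonempty hLU.eigenvalues := by
  obtain ⟨x, hx_unit, hx_max⟩ := hL.exists_dotProduct_mulVec_eq_sup'_eigenvalues
  have habs_unit : |x| ⬝ᵥ |x| = 1 := by
    simpa only [dotProduct, Pi.abs_apply, abs_mul_abs_self] using hx_unit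
  calc univ.sup' univ_nonempty hL.eigenvalues = x ⬝ᵥ (H * Hᵀ) *ᵥ x := hx_max.symm
    _ ≤ |x| ⬝ᵥ (HU * HUᵀ) *ᵥ |x| :=
      dotProduct_mul_transpose_mulVec_le_abs
        (fun v e => abs_eq_abs_of_signs (hH v e) (hHU v e) (hsupp v e))
        (fun e => nonneg_or_nonpos_of_forall_ne_zero_eq (hunif e)) x
    _ ≤ univ.sup' univ_nonempty hLU.eigenvalues * (|x| ⬝ᵥ |x|) :=
      hLU.dotProduct_mulVec_le_sup'_eigenvalues_mul |x|
    _ = univ.sup' univ_nonempty hLU.eigenvalues := by rw [habs_unit, mul_one]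

/-- For a linear oriented hypergraph with incidence matrix `H` and any
uniformly oriented hypergraph `U` with the same underlying hypergraph (incidence matrix
`HU` with the same support, each column of `HU` having all nonzero entries equal),
the largest Laplacian eigenvalue satisfies `λ_1(H Hᵀ) ≤ λ_1(HU HUᵀ)`. -/
theorem laplacian_spectral_radius_le_uniformly_oriented
    {V E : Type*} [Fintype V] [Fintype E] [DecidableEq V] [Nonempty V]
    (H HU : Matrix V E ℝ)
    (hH : ∀ v e, H v e = -1 ∨ H v e = 0 ∨ H v e = 1)
    (hHU : ∀ v e, HU v e = -1 ∨ HU v e = 0 ∨ HU v e = 1)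
    (hlin : ∀ e f : E, e ≠ f →
      (Finset.univ.filter (fun v => H v e ≠ 0 ∧ H v f ≠ 0)).card ≤ 1)
    (hsupp : ∀ v e, HU v e ≠ 0 ↔ H v e ≠ 0)
    (hunif : ∀ (e : E) (v w : V), HU v e ≠ 0 → HU w e ≠ 0 → HU v e = HU w e)
    (hL : (H * Hᵀ).IsHermitian) (hLU : (HU * HUᵀ).IsHermitian) :
    Finset.univ.sup' Finset.univ_nonempty hL.eigenvalues ≤
      Finset.univ.sup' Finset.univ_nonempty hLU.eigenvalues :=
  laplacian_spectral_radius_le_uniformly_oriented_general H HU hH hHU hsupp hunif hL hLU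
end

section
/- Let G be an oriented hypergraph on a nonempty finite vertex set V with Laplacian matrix L = H Hᵀ. Then λ_1(L) ≤ max over v ∈ V of (d(v) + NumAdj(v)), where λ_1(L) is the largest eigenvalue of L. -/
open Matrix Finset

/-- For an oriented hypergraph on a nonempty finite vertex set with
Laplacian `L = H Hᵀ`, the largest eigenvalue satisfies
`λ_1(L) ≤ max_v (d(v) + NumAdj(v))`. -/
theorem laplacian_spectral_radius_le_max_degree_plus_numAdj
    {V E : Type*} [Fintype V] [Fintype E] [DecidableEq V] [Nonempty V]
    (H : Matrix V E ℝ) (hH : ∀ v e, H v e = -1 ∨ H v e = 0 ∨ H v e = 1)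
    (hL : (H * Hᵀ).IsHermitian)
    (deg : V → ℕ)
    (hdeg : ∀ v, deg v = (Finset.univ.filter (fun e : E => H v e ≠ 0)).card)
    (numAdj : V → ℕ)
    (hnum : ∀ v, numAdj v =
      (Finset.univ.filter (fun p : E × V => p.2 ≠ v ∧ H v p.1 ≠ 0 ∧ H p.2 p.1 ≠ 0)).card) :
    Finset.univ.sup' Finset.univ_nonempty hL.eigenvalues ≤
      Finset.univ.sup' Finset.univ_nonempty (fun v => ((deg v : ℝ) + (numAdj v : ℝ))) := by
  set L := H * Hᵀ with hLdef
  -- abs of entries as indicator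
  have habs : ∀ v e, |H v e| = if H v e ≠ 0 then (1:ℝ) else 0 := by
    intro v e
    rcases hH v e with h | h | h <;> simp [h]
  apply Finset.sup'_le
  intro i _
  set μ := hL.eigenvalues i with hμdef
  -- μ is an eigenvalue of toLin' L
  have hev : Module.End.HasEigenvalue (Matrix.toLin' L) μ := by
    apply Module.End.hasEigenvalue_of_hasEigenvector (x := ⇑(hL.eigenvectorBasis i))
    constructor
    · rw [Module.End.mem_eigenspace_iff, Matrix.toLin'_apply]
      exact hL.mulVec_eigenvectorBasis i
    · intro h
      exact (hL.eigenvectorBasis.toBasis.ne_zero i) (by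
        apply (hL.eigenvectorBasis i).ext
        intro j
        simpa using congrFun h j)
  obtain ⟨k, hk⟩ := eigenvalue_mem_ball hev
  rw [Metric.mem_closedBall, Real.dist_eq, abs_sub_le_iff] at hk
  have h1 : μ ≤ L k k + ∑ j ∈ Finset.univ.erase k, ‖L k j‖ := by
    linarith [hk.1]
  -- diagonal = deg
  have hdiag : L k k = (deg k : ℝ) := by
    rw [hdeg k, Finset.card_filter]
    push_cast
    simp only [hLdef, Matrix.mul_apply, Matrix.transpose_apply]
    apply Finset.sum_congr rfl
    intro e _
    rcases hH k e with h | h | h <;> simp [h]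
  -- off-diagonal sum ≤ numAdj
  have hoff : ∑ j ∈ Finset.univ.erase k, ‖L k j‖ ≤ (numAdj k : ℝ) := by
    have hterm : ∀ j, ‖L k j‖ ≤ ∑ e : E, |H k e| * |H j e| := by
      intro j
      simp only [hLdef, Matrix.mul_apply, Matrix.transpose_apply, Real.norm_eq_abs]
      calc |∑ e : E, H k e * H j e| ≤ ∑ e : E, |H k e * H j e| := Finset.abs_sum_le_sum_abs _ _
        _ = ∑ e : E, |H k e| * |H j e| := by simp [abs_mul]
    calc ∑ j ∈ Finset.univ.erase k, ‖L k j‖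
        ≤ ∑ j ∈ Finset.univ.erase k, ∑ e : E, |H k e| * |H j e| :=
          Finset.sum_le_sum fun j _ => hterm j
      _ = (numAdj k : ℝ) := by
          rw [hnum k, Finset.card_filter]
          push_cast
          rw [Fintype.sum_prod_type, Finset.sum_comm]
          apply Finset.sum_congr rfl
          intro e _
          rw [← Finset.sum_erase (a := k) (f := fun j =>
            if (j ≠ k ∧ H k e ≠ 0 ∧ H j e ≠ 0) then (1:ℝ) else 0) Finset.univ (by simp)]
          apply Finset.sum_congr rfl
          intro j hj
          have hjk : j ≠ k := Finset.ne_of_mem_erase hj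
          rw [habs, habs]
          rcases hH k e with h1 | h1 | h1 <;> rcases hH j e with h2 | h2 | h2 <;>
            simp [h1, h2, hjk]
  calc μ ≤ (deg k : ℝ) + (numAdj k : ℝ) := by rw [hdiag] at h1; linarith
    _ ≤ _ := Finset.le_sup' (f := fun v => ((deg v : ℝ) + (numAdj v : ℝ))) (Finset.mem_univ k)
end

section
/- Let G be an oriented hypergraph on a nonempty finite vertex set V with |V| = n, and let L = H Hᵀ be its Laplacian. Then λ_n(L) ≤ (1/n) · ∑_{v ∈ V} (d(v) − NumAdj^±(v)) ≤ λ_1(L), where λ_1(L) ≥ … ≥ λ_n(L) are the eigenvalues of L in decreasing order. -/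
/-!
Summing `d(v) − NumAdj^±(v)` over `v` gives `𝟙ᵀ L 𝟙`: the degree of `v` is the diagonal entry
`L v v` (entries of `H` are `0, ±1`) and the net adjacency count is minus the off-diagonal row sum
of `L`. Since `𝟙ᵀ 𝟙 = n`, the claim is the Rayleigh-quotient bound
`λ_n ‖x‖² ≤ xᵀ L x ≤ λ_1 ‖x‖²` at `x = 𝟙`.
-/

open Matrix Finset
open scoped MatrixOrder ComplexOrder

section Rayleigh

variable {𝕜 n : Type*} [RCLike 𝕜] [Fintype n] [DecidableEq n] {A : Matrix n n 𝕜}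

theorem Matrix.IsHermitian.mul_dotProduct_self_le_dotProduct_mulVec (hA : A.IsHermitian)
    {c : ℝ} (hc : ∀ i, c ≤ hA.eigenvalues i) (x : n → 𝕜) :
    (c : 𝕜) * (star x ⬝ᵥ x) ≤ star x ⬝ᵥ A *ᵥ x := by
  have hle : algebraMap ℝ (Matrix n n 𝕜) c ≤ A := by
    rw [algebraMap_le_iff_le_spectrum hA.isSelfAdjoint, hA.spectrum_real_eq_range_eigenvalues]
    rintro _ ⟨i, rfl⟩
    exact hc i
  have hpsd := (le_iff.mp hle).dotProduct_mulVec_nonneg x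
  rw [sub_mulVec, dotProduct_sub, sub_nonneg, algebraMap_eq_diagonal] at hpsd
  simpa [mulVec_diagonal, dotProduct, mul_sum, mul_left_comm] using hpsd

theorem Matrix.IsHermitian.dotProduct_mulVec_le_mul_dotProduct_self (hA : A.IsHermitian)
    {c : ℝ} (hc : ∀ i, hA.eigenvalues i ≤ c) (x : n → 𝕜) :
    star x ⬝ᵥ A *ᵥ x ≤ (c : 𝕜) * (star x ⬝ᵥ x) := by
  have hle : A ≤ algebraMap ℝ (Matrix n n 𝕜) c := by
    rw [le_algebraMap_iff_spectrum_le hA.isSelfAdjoint, hA.spectrum_real_eq_range_eigenvalues]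
    rintro _ ⟨i, rfl⟩
    exact hc i
  have hpsd := (le_iff.mp hle).dotProduct_mulVec_nonneg x
  rw [sub_mulVec, dotProduct_sub, sub_nonneg, algebraMap_eq_diagonal] at hpsd
  simpa [mulVec_diagonal, dotProduct, mul_sum, mul_left_comm] using hpsd

end Rayleigh

section SignedIncidence

variable {V E : Type*} [Fintype E] (H : Matrix V E ℝ)

theorem card_filter_ne_zero_eq_mul_transpose_apply_self {v : V}
    (hv : ∀ e, H v e = -1 ∨ H v e = 0 ∨ H v e = 1) :
    ((univ.filter fun e => H v e ≠ 0).card : ℝ) = (H * Hᵀ) v v := by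
  rw [card_filter, mul_apply]
  push_cast
  refine sum_congr rfl fun e _ => ?_
  rcases hv e with h | h | h <;> simp [h]

theorem sum_filter_neg_mul_eq_neg_sum_erase_mul_transpose [Fintype V] [DecidableEq V] (v : V) :
    ∑ p ∈ univ.filter (fun p : E × V => p.2 ≠ v ∧ H v p.1 ≠ 0 ∧ H p.2 p.1 ≠ 0),
        -(H v p.1 * H p.2 p.1) = -∑ w ∈ univ.erase v, (H * Hᵀ) v w := by
  calc _ = ∑ p ∈ (univ ×ˢ univ.erase v).filter (fun p : E × V => H v p.1 ≠ 0 ∧ H p.2 p.1 ≠ 0),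
          -(H v p.1 * H p.2 p.1) := by
        congr 1
        ext p
        simp
    _ = ∑ p ∈ univ ×ˢ univ.erase v, -(H v p.1 * H p.2 p.1) :=
        sum_filter_of_ne fun p _ hp => by simpa [not_or] using hp
    _ = _ := by
        rw [sum_product_right, ← sum_neg_distrib]
        simp [mul_apply]

theorem card_filter_ne_zero_sub_sum_filter_neg_mul_eq_mul_transpose_mulVec_one [Fintype V]
    [DecidableEq V] {v : V} (hv : ∀ e, H v e = -1 ∨ H v e = 0 ∨ H v e = 1) :
    ((univ.filter fun e => H v e ≠ 0).card : ℝ) -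
        ∑ p ∈ univ.filter (fun p : E × V => p.2 ≠ v ∧ H v p.1 ≠ 0 ∧ H p.2 p.1 ≠ 0),
          -(H v p.1 * H p.2 p.1) = ((H * Hᵀ) *ᵥ 1) v := by
  rw [card_filter_ne_zero_eq_mul_transpose_apply_self H hv,
    sum_filter_neg_mul_eq_neg_sum_erase_mul_transpose, sub_neg_eq_add,
    add_sum_erase _ _ (mem_univ v)]
  simp [mulVec, dotProduct]

end SignedIncidence

/-- For an oriented hypergraph on a nonempty finite vertex set `V` with
`n = |V|` and Laplacian `L = H Hᵀ`, the eigenvalues in decreasing order satisfy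
`λ_n(L) ≤ (1/n) ∑_v (d(v) − NumAdj^±(v)) ≤ λ_1(L)`. -/
theorem laplacian_eigenvalue_bounds_degrees_net_adjacencies
    {V E : Type*} [Fintype V] [Fintype E] [DecidableEq V] [Nonempty V]
    (H : Matrix V E ℝ) (hH : ∀ v e, H v e = -1 ∨ H v e = 0 ∨ H v e = 1)
    (hL : (H * Hᵀ).IsHermitian)
    (μ : Fin (Fintype.card V) → ℝ) (hmono : Antitone μ)
    (hμ : ∃ g : Fin (Fintype.card V) ≃ V, μ = hL.eigenvalues ∘ g)
    (deg : V → ℕ)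
    (hdeg : ∀ v, deg v = (Finset.univ.filter (fun e : E => H v e ≠ 0)).card)
    (netAdj : V → ℝ)
    (hnet : ∀ v, netAdj v = ∑ p ∈ Finset.univ.filter
        (fun p : E × V => p.2 ≠ v ∧ H v p.1 ≠ 0 ∧ H p.2 p.1 ≠ 0),
        -(H v p.1 * H p.2 p.1)) :
    μ ⟨Fintype.card V - 1, Nat.sub_lt Fintype.card_pos Nat.one_pos⟩ ≤
        (1 / (Fintype.card V : ℝ)) * ∑ v, ((deg v : ℝ) - netAdj v) ∧
      (1 / (Fintype.card V : ℝ)) * ∑ v, ((deg v : ℝ) - netAdj v) ≤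
        μ ⟨0, Fintype.card_pos⟩ := by
  obtain ⟨g, rfl⟩ := hμ
  have hsum : ∑ v, ((deg v : ℝ) - netAdj v) = 1 ⬝ᵥ (H * Hᵀ) *ᵥ 1 := by
    simp only [hdeg, hnet, card_filter_ne_zero_sub_sum_filter_neg_mul_eq_mul_transpose_mulVec_one H
      (hH _), one_dotProduct]
  have hone : (1 : V → ℝ) ⬝ᵥ 1 = Fintype.card V := by simp
  have hn : (0 : ℝ) < Fintype.card V := by exact_mod_cast Fintype.card_pos
  have hlo : ∀ v, hL.eigenvalues (g ⟨_, Nat.sub_lt Fintype.card_pos Nat.one_pos⟩) ≤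
      hL.eigenvalues v := fun v => by
    simpa using hmono (a := g.symm v) (b := ⟨_, Nat.sub_lt Fintype.card_pos Nat.one_pos⟩)
      (Nat.le_sub_one_of_lt (g.symm v).2)
  have hhi : ∀ v, hL.eigenvalues v ≤ hL.eigenvalues (g ⟨0, Fintype.card_pos⟩) := fun v => by
    simpa using hmono (a := ⟨0, Fintype.card_pos⟩) (b := g.symm v) (Nat.zero_le _)
  have lower := hL.mul_dotProduct_self_le_dotProduct_mulVec hlo 1
  have upper := hL.dotProduct_mulVec_le_mul_dotProduct_self hhi 1
  simp only [hone, star_trivial, RCLike.ofReal_real_eq_id, id_eq] at lower upper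
  rw [hsum, Function.comp_apply, Function.comp_apply, one_div_mul_eq_div, le_div_iff₀ hn,
    div_le_iff₀ hn]
  exact ⟨lower, upper⟩
end

section
/- Let G be a linear oriented hypergraph on a finite vertex set V and finite edge set E with incidence matrix H and Laplacian L = H Hᵀ. Then all entries of L are nonnegative if and only if every edge of G is uniformly oriented (i.e., for every e ∈ E, all nonzero entries of column e of H are equal). -/
open Matrix Finset

/-- For a linear oriented hypergraph with incidence matrix `H` and
Laplacian `L = H Hᵀ`, all entries of `L` are nonnegative if and only if every edge is
uniformly oriented (all nonzero entries of each column of `H` are equal). -/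
theorem laplacian_nonneg_iff_uniformly_oriented
    {V E : Type*} [Fintype V] [Fintype E] [DecidableEq V]
    (H : Matrix V E ℝ) (hH : ∀ v e, H v e = -1 ∨ H v e = 0 ∨ H v e = 1)
    (hlin : ∀ e f : E, e ≠ f →
      (Finset.univ.filter (fun v => H v e ≠ 0 ∧ H v f ≠ 0)).card ≤ 1) :
    (∀ v w : V, 0 ≤ (H * Hᵀ) v w) ↔
      (∀ (e : E) (v w : V), H v e ≠ 0 → H w e ≠ 0 → H v e = H w e) := by
  constructor
  · intro hL e v w hv hw
    by_contra hne
    have hvw : v ≠ w := fun h => hne (by rw [h])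
    have hterm : H v e * H w e = -1 := by
      rcases hH v e with h1 | h1 | h1 <;> rcases hH w e with h2 | h2 | h2 <;>
        simp_all
    have hzero : ∀ f ∈ Finset.univ, f ≠ e → H v f * H w f = 0 := by
      intro f _ hfe
      by_contra hz
      have hvf : H v f ≠ 0 := fun h => hz (by simp [h])
      have hwf : H w f ≠ 0 := fun h => hz (by simp [h])
      have hle := hlin e f (Ne.symm hfe)
      have hsub : ({v, w} : Finset V) ⊆
          Finset.univ.filter (fun u => H u e ≠ 0 ∧ H u f ≠ 0) := by
        intro u hu
        simp only [Finset.mem_insert, Finset.mem_singleton] at hu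
        rcases hu with rfl | rfl <;> simp [hv, hw, hvf, hwf]
      have hcard : 2 ≤ (Finset.univ.filter (fun u => H u e ≠ 0 ∧ H u f ≠ 0)).card := by
        calc 2 = ({v, w} : Finset V).card := by
              rw [Finset.card_insert_of_notMem (by simp [hvw]), Finset.card_singleton]
          _ ≤ _ := Finset.card_le_card hsub
      omega
    have hnn := hL v w
    rw [Matrix.mul_apply] at hnn
    simp only [Matrix.transpose_apply] at hnn
    rw [Finset.sum_eq_single_of_mem e (Finset.mem_univ e) hzero, hterm] at hnn
    linarith
  · intro huni v w
    rw [Matrix.mul_apply]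
    apply Finset.sum_nonneg
    intro e _
    simp only [Matrix.transpose_apply]
    by_cases hv : H v e = 0
    · simp [hv]
    by_cases hw : H w e = 0
    · simp [hw]
    rw [huni e v w hv hw]
    exact mul_self_nonneg _
end
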